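/- For every optimiser a, the expected optimisation time under the uniform needle-in-a-haystack distribution equals (n+1)/2: Σ over the n NIAH functions f of (1/n) · M_ptm(T^y(a,f)) = (n+1)/2. -/

import Mathlib

namespace NFL

/-- A (deterministic) optimiser on search space `Fin n` and range `Y`:
it assigns to every trace (list of pairs with pairwise distinct first
components) of length `< n` a next, unvisited search point. -/
structure Optimiser (n : ℕ) (Y : Type*) where
  next : List (Fin n × Y) → Fin n
  valid : ∀ T : List (Fin n × Y), T.length < n → (T.map Prod.fst).Nodup →
    next T ∉ T.map Prod.fst

variable {n : ℕ} {Y : Type*}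

/-- The trace generated after `k` steps by running optimiser `a`
on target function `f`, starting from the empty trace. -/
def runFrom (a : Optimiser n Y) (f : Fin n → Y) : ℕ → List (Fin n × Y)
  | 0 => []
  | k + 1 =>
      runFrom a f k ++ [(a.next (runFrom a f k), f (a.next (runFrom a f k)))]

/-- The result vector `T^y(a,f)`: its `i`-th entry (0-indexed) is the value
observed at step `i+1`, i.e. `f` applied to the point probed after `i` steps. -/
def resVec (a : Optimiser n Y) (f : Fin n → Y) (i : Fin n) : Y :=
  f (a.next (runFrom a f (i : ℕ)))

/-- A problem distribution: a probability distribution on `Y^X`. -/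
def IsProbDist [Fintype Y] (P : (Fin n → Y) → ℝ) : Prop :=
  (∀ f, 0 ≤ P f) ∧ ∑ f, P f = 1

/-- `P_a(R)`: the probability that optimiser `a` produces result vector `R`. -/
def resProb [Fintype Y] [DecidableEq Y] (P : (Fin n → Y) → ℝ)
    (a : Optimiser n Y) (R : Fin n → Y) : ℝ :=
  ∑ f ∈ Finset.univ.filter (fun f => resVec a f = R), P f

/-- Expected performance `M^P(a)` of optimiser `a` under distribution `P`
and performance measure `M`. -/
def perf [Fintype Y] (P : (Fin n → Y) → ℝ) (M : (Fin n → Y) → ℝ)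
    (a : Optimiser n Y) : ℝ :=
  ∑ f, P f * M (resVec a f)

/-- NFL holds for `P`: all optimisers have the same expected performance
under every (nonnegative) performance measure. -/
def NFLholds [Fintype Y] (P : (Fin n → Y) → ℝ) : Prop :=
  ∀ M : (Fin n → Y) → ℝ, (∀ R, 0 ≤ M R) →
    ∀ a b : Optimiser n Y, perf P M a = perf P M b

/-- The histogram of `f`: `h_f(y) = |f⁻¹(y)|`. -/
def histogram [DecidableEq Y] (f : Fin n → Y) (y : Y) : ℕ :=
  (Finset.univ.filter fun x => f x = y).card

/-- `P` is block uniform: functions with equal histograms get equal probability. -/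
def BlockUniform [DecidableEq Y] (P : (Fin n → Y) → ℝ) : Prop :=
  ∀ f g : Fin n → Y, histogram f = histogram g → P f = P g

/-- `F` is closed under permutation: `f ∈ F` implies `σf ∈ F`,
where `(σf)(x) = f(σ⁻¹(x))`. -/
def Cup [Fintype Y] [DecidableEq Y] (F : Finset (Fin n → Y)) : Prop :=
  ∀ f ∈ F, ∀ σ : Equiv.Perm (Fin n), (f ∘ σ.symm) ∈ F

/-- The uniform distribution on a class `F`. -/
noncomputable def uniformOn [Fintype Y] [DecidableEq Y] (F : Finset (Fin n → Y))
    (f : Fin n → Y) : ℝ :=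
  if f ∈ F then 1 / F.card else 0

/-- An optimiser is non-adaptive if it probes the points of `X` in a fixed
order, regardless of the observed values. -/
def NonAdaptive (a : Optimiser n Y) : Prop :=
  ∃ ord : Fin n → Fin n,
    ∀ (f : Fin n → Y) (i : Fin n), a.next (runFrom a f (i : ℕ)) = ord i

/-- Optimisation time `M_ptm(R)`: the least index `i` (counting from 1) with
`R[i] = yMax`, with the convention `M_ptm(R) = n` if no such index exists. -/
def mptm [DecidableEq Y] (yMax : Y) (R : Fin n → Y) : ℕ :=
  if h : ∃ i, R i = yMax then
    ((Finset.univ.filter fun i => R i = yMax).min'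
      ⟨h.choose, Finset.mem_filter.mpr ⟨Finset.mem_univ _, h.choose_spec⟩⟩).val + 1
  else n

/-! Running any optimiser on the constant function `false` fixes a probing order,
which is a permutation of `Fin n`. A needle placed at the `k`-th point of this order is not
seen before step `k`, so up to that step the run coincides with the run on `false`; the needle
is therefore found at time `k + 1`, and averaging `k + 1` over `k < n` gives `(n + 1) / 2`. -/

section Runs

variable (a : Optimiser n Y) (f : Fin n → Y)

lemma runFrom_length (k : ℕ) : (runFrom a f k).length = k := by
  induction k with
  | zero => rfl
  | succ k ih => simp [runFrom, ih]

lemma runFrom_map_fst (k : ℕ) :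
    (runFrom a f k).map Prod.fst = (List.range k).map fun i => a.next (runFrom a f i) := by
  induction k with
  | zero => rfl
  | succ k ih => simp [runFrom, List.range_succ, ih]

lemma runFrom_nodup {k : ℕ} (hk : k ≤ n) : ((runFrom a f k).map Prod.fst).Nodup := by
  induction k with
  | zero => simp [runFrom]
  | succ k ih =>
    have hlen : (runFrom a f k).length < n := by rw [runFrom_length]; omega
    have hfresh := a.valid _ hlen (ih (by omega))
    simp only [runFrom, List.map_append, List.map_cons, List.map_nil]
    exact (ih (by omega)).append (List.nodup_singleton _)
      (by simpa [List.disjoint_singleton] using hfresh)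

lemma next_runFrom_ne {i j : ℕ} (hij : i < j) (hj : j < n) :
    a.next (runFrom a f i) ≠ a.next (runFrom a f j) := by
  intro h
  have hlen : (runFrom a f j).length < n := by rw [runFrom_length]; omega
  apply a.valid _ hlen (runFrom_nodup a f hj.le)
  rw [runFrom_map_fst]
  exact List.mem_map.mpr ⟨i, List.mem_range.mpr hij, h⟩

def probe (i : Fin n) : Fin n := a.next (runFrom a f i)

lemma probe_injective : Function.Injective (probe a f) := by
  intro i j h
  by_contra hne
  rcases Fin.lt_or_lt_of_ne hne with hlt | hlt
  · exact next_runFrom_ne a f hlt j.isLt h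
  · exact next_runFrom_ne a f hlt i.isLt h.symm

lemma probe_bijective : Function.Bijective (probe a f) :=
  Finite.injective_iff_bijective.mp (probe_injective a f)

lemma runFrom_congr {g : Fin n → Y} {j : ℕ}
    (h : ∀ i < j, f (a.next (runFrom a f i)) = g (a.next (runFrom a f i))) :
    runFrom a f j = runFrom a g j := by
  induction j with
  | zero => rfl
  | succ j ih =>
    have hrun := ih fun i hi => h i (by omega)
    simp only [runFrom]
    rw [h j (by omega), hrun]

end Runs

lemma mptm_eq_of_first [DecidableEq Y] {yMax : Y} {R : Fin n → Y} {k : Fin n}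
    (hk : R k = yMax) (hbefore : ∀ i < k, R i ≠ yMax) : mptm yMax R = (k : ℕ) + 1 := by
  have hmem : k ∈ Finset.univ.filter fun i => R i = yMax := by simpa using hk
  rw [mptm, dif_pos ⟨k, hk⟩]
  congr 2
  refine le_antisymm (Finset.min'_le _ k hmem) (Finset.le_min' _ _ _ fun i hi => ?_)
  exact not_lt.mp fun hik => hbefore i hik (Finset.mem_filter.mp hi).2

def needle {α : Type*} [DecidableEq α] (x : α) : α → Bool := fun y => decide (y = x)

lemma needle_injective {α : Type*} [DecidableEq α] : Function.Injective (needle (α := α)) :=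
  fun x y h => by simpa [needle] using congrFun h x

lemma card_filter_eq_true_eq_one_iff {α : Type*} [Fintype α] [DecidableEq α] (f : α → Bool) :
    (Finset.univ.filter fun x => f x = true).card = 1 ↔ ∃ x, needle x = f := by
  simp only [Finset.card_eq_one, Finset.ext_iff, funext_iff, needle, Finset.mem_filter,
    Finset.mem_univ, true_and, Finset.mem_singleton]
  refine exists_congr fun x => forall_congr' fun y => ?_
  cases f y <;> simp [eq_comm]

lemma mptm_resVec_needle_probe (a : Optimiser n Bool) (k : Fin n) :
    mptm true (resVec a (needle (probe a (fun _ => false) k))) = (k : ℕ) + 1 := by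
  set f₀ : Fin n → Bool := fun _ => false
  have hrun : ∀ i ≤ k, runFrom a f₀ i = runFrom a (needle (probe a f₀ k)) i := fun i hik =>
    runFrom_congr a f₀ fun j hj =>
      (decide_eq_false (next_runFrom_ne a f₀ (by omega) k.isLt)).symm
  have hres : ∀ i ≤ k, resVec a (needle (probe a f₀ k)) i = decide (i = k) := fun i hik => by
    rw [resVec, ← hrun i hik]
    exact decide_eq_decide.mpr (probe_injective a f₀).eq_iff
  apply mptm_eq_of_first
  · simpa using hres k le_rfl
  · intro i hik
    simpa [hres i hik.le] using hik.ne

lemma two_mul_sum_fin_val_add_one {R : Type*} [CommSemiring R] (n : ℕ) :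
    2 * ∑ k : Fin n, ((k : R) + 1) = n * (n + 1) := by
  induction n with
  | zero => simp
  | succ n ih =>
    rw [Fin.sum_univ_castSucc, mul_add]
    simp only [Fin.val_castSucc, Fin.val_last, ih]
    push_cast
    ring

theorem niah_expected_optimisation_time {n : ℕ} (hn : 1 ≤ n)
    (a : Optimiser n Bool) :
    ∑ f ∈ Finset.univ.filter
        (fun f : Fin n → Bool => (Finset.univ.filter fun x => f x = true).card = 1),
      (1 / (n : ℝ)) * (mptm true (resVec a f) : ℝ) = ((n : ℝ) + 1) / 2 := by
  have hniah : (Finset.univ.filter fun f : Fin n → Bool =>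
      (Finset.univ.filter fun x => f x = true).card = 1) = Finset.univ.image needle := by
    ext f
    simp [card_filter_eq_true_eq_one_iff]
  let order := Equiv.ofBijective _ (probe_bijective a fun _ => false)
  have hgauss := two_mul_sum_fin_val_add_one (R := ℝ) n
  have hn0 : (n : ℝ) ≠ 0 := Nat.cast_ne_zero.mpr (by omega)
  calc _ = ∑ x, (1 / (n : ℝ)) * (mptm true (resVec a (needle x)) : ℝ) := by
        rw [hniah, Finset.sum_image fun x _ y _ h => needle_injective h]
    _ = ∑ k : Fin n, (1 / (n : ℝ)) * ((k : ℝ) + 1) := by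
        rw [← order.sum_comp]
        simp [order, mptm_resVec_needle_probe]
    _ = ((n : ℝ) + 1) / 2 := by
        rw [← Finset.mul_sum]
        field_simp
        linarith

end NFL
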